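/- Let p be a prime, let F ∈ ℤ[x] be monic of degree m, and write F(j) = Σ_{n ≥ −m} a(n)qⁿ. Suppose there exists G ∈ ℤ[x] with F(j) | U(p) ≡ G(j) (mod p), and suppose a(−pn) ≡ 0 (mod p) for every integer n > 0. Then F(j) | U(p) ≡ a(0) (mod p), i.e. the reduction of G modulo p is the constant a(0) mod p. -/

import Mathlib

open scoped LaurentSeries

open Polynomial in
/-- `∏_{n≥1} (1 - qⁿ)^24`, as a formal power series: its `n`-th coefficient agrees with
that of the finite product `∏_{k=1}^{n} (1 - q^k)^24`. -/
noncomputable def etaPow24 : PowerSeries ℤ :=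
  PowerSeries.mk fun n =>
    PowerSeries.coeff n (∏ k ∈ Finset.range n, ((1 : PowerSeries ℤ) - PowerSeries.X ^ (k + 1)) ^ 24)

/-- The `q`-expansion of the normalized Eisenstein series `E₄ = 1 + 240 Σ_{n≥1} σ₃(n) qⁿ`. -/
noncomputable def E4 : PowerSeries ℤ :=
  PowerSeries.mk fun n => if n = 0 then 1 else 240 * ∑ d ∈ Nat.divisors n, (d : ℤ) ^ 3

/-- The formal `q`-expansion of the modular `j`-function:
`j = q⁻¹ · (1 + 240 Σ σ₃(n) qⁿ)³ · ∏_{n≥1}(1 - qⁿ)^{-24} = q⁻¹ + 744 + 196884 q + ⋯ ∈ ℤ((q))`.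
Its `n`-th coefficient is `c(n)`, accessed as `jq.coeff n`. -/
noncomputable def jq : LaurentSeries ℤ :=
  HahnSeries.single (-1 : ℤ) (1 : ℤ) *
    HahnSeries.ofPowerSeries ℤ ℤ (E4 ^ 3 * PowerSeries.invOfUnit etaPow24 1)

/-- The classical modular `j`-function on the complex upper half-plane (equal to
`1728·E₄³/(E₄³ - E₆²)`), given by its absolutely convergent `q`-expansion
`j(τ) = Σ_{n ≥ -1} c(n) e^{2πinτ}` (the sum over `n : ℕ` of the terms with exponent `n - 1`). -/
noncomputable def jUHP (τ : UpperHalfPlane) : ℂ :=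
  ∑' n : ℕ, (jq.coeff ((n : ℤ) - 1) : ℂ) *
    Complex.exp (2 * Real.pi * Complex.I * ((n : ℤ) - 1) * (τ : ℂ))

/-- The set of singular moduli of discriminant `-D`: the values `j(τ)` where `τ ∈ ℍ`
satisfies `aτ² + bτ + c = 0` with `a > 0`, `gcd(a,b,c) = 1`, `b² - 4ac = -D`. -/
def singularModuli (D : ℤ) : Set ℂ :=
  {z | ∃ τ : UpperHalfPlane, z = jUHP τ ∧ ∃ a b c : ℤ, 0 < a ∧ Int.gcd (Int.gcd a b) c = 1 ∧
    (a : ℂ) * (τ : ℂ) ^ 2 + (b : ℂ) * (τ : ℂ) + (c : ℂ) = 0 ∧ b ^ 2 - 4 * a * c = -D}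

/-- `H` is the Hilbert class polynomial `𝓗_D` of discriminant `-D`: the monic integer
polynomial whose image in `ℂ[x]` is the product of `(x - s)` over the (finitely many)
distinct singular moduli `s` of discriminant `-D`.  Its degree is then `h(-D)`. -/
def IsHilbertClassPoly (D : ℤ) (H : Polynomial ℤ) : Prop :=
  H.Monic ∧ ∃ S : Finset ℂ, (S : Set ℂ) = singularModuli D ∧
    H.map (Int.castRingHom ℂ) = ∏ s ∈ S, (Polynomial.X - Polynomial.C s)

/-- `d` is a fundamental discriminant (the discriminant of a quadratic field):
either `d ≡ 1 (mod 4)` and `d` is squarefree, or `d ≡ 0 (mod 4)`, `d/4` is squarefree,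
and `d/4 ≡ 2` or `3 (mod 4)`. -/
def IsFundamentalDiscriminant (d : ℤ) : Prop :=
  (d % 4 = 1 ∧ Squarefree d) ∨
    (d % 4 = 0 ∧ Squarefree (d / 4) ∧ (d / 4 % 4 = 2 ∨ d / 4 % 4 = 3))

open Classical in
/-- `j₀ ∈ F̄_p` is a supersingular `j`-invariant: `j₀ = j(E)` for an elliptic curve `E`
over `F̄_p` whose group of points `E(F̄_p)` has no point of order `p`. -/
def IsSupersingularJ (p : ℕ) [Fact p.Prime] (j₀ : AlgebraicClosure (ZMod p)) : Prop :=
  ∃ (W : WeierstrassCurve (AlgebraicClosure (ZMod p))) (h : W.IsElliptic),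
    @WeierstrassCurve.j _ _ W h = j₀ ∧ ∀ P : W.toAffine.Point, addOrderOf P ≠ p

/-- The substitution `q ↦ q^p` on formal Laurent series: `(qPow p f).coeff (p*n) = f.coeff n`
and all other coefficients vanish. -/
noncomputable def qPow (p : ℕ) (f : LaurentSeries ℤ) : LaurentSeries ℤ :=
  if hp : 0 < p then
    HahnSeries.embDomain
      (OrderEmbedding.ofStrictMono (fun n : ℤ => (p : ℤ) * n)
        (fun a b h => mul_lt_mul_of_pos_left h (by exact_mod_cast hp))) f
  else f

/-- The `q`-expansion of the Delta-function `Δ = q ∏_{n≥1}(1 - qⁿ)²⁴ = Σ_{n≥1} τ(n) qⁿ`;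
its `n`-th coefficient is Ramanujan's `τ(n)`. -/
noncomputable def Δq : PowerSeries ℤ := PowerSeries.X * etaPow24

/-!
Reduce modulo `p`. The hypotheses say that `Ḡ(j̄)`, the reduction of `F(j) | U(p)`, has no terms
of negative order. But `j̄ = q⁻¹ + O(1)` has a pole, so over the domain `ZMod p` a polynomial `Ḡ`
of degree `d` gives a series `Ḡ(j̄)` whose coefficient of `q^{-d}` is the leading coefficient of
`Ḡ`. Hence `Ḡ` is constant, and all nonconstant coefficients of `F(j) | U(p)` vanish mod `p`.
-/

open Polynomial

namespace HahnSeries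

variable {Γ R S : Type*} [AddCommMonoid Γ]

theorem leadingCoeff_pow [LinearOrder Γ] [IsOrderedCancelAddMonoid Γ] [Semiring R]
    [NoZeroDivisors R] (x : R⟦Γ⟧) (n : ℕ) : (x ^ n).leadingCoeff = x.leadingCoeff ^ n := by
  induction n with
  | zero => simp
  | succ n ih => rw [pow_succ, leadingCoeff_mul, ih, pow_succ]

variable [PartialOrder Γ] [IsOrderedCancelAddMonoid Γ] [Semiring R] [Semiring S]

def mapRingHom (f : R →+* S) : R⟦Γ⟧ →+* S⟦Γ⟧ where
  toFun x := x.map f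
  map_one' := HahnSeries.map_one f.toMonoidWithZeroHom
  map_mul' _ _ := HahnSeries.map_mul (f : R →ₙ+* S)
  map_zero' := HahnSeries.map_zero (f : ZeroHom R S)
  map_add' _ _ := HahnSeries.map_add (f : R →+ S)

@[simp]
theorem coeff_mapRingHom (f : R →+* S) (x : R⟦Γ⟧) (g : Γ) :
    (mapRingHom f x).coeff g = f (x.coeff g) :=
  rfl

end HahnSeries

namespace LaurentSeries

section CommSemiring

variable {R : Type*} [CommSemiring R]

theorem algebraMap_apply_eq_C (c : R) : algebraMap R R⸨X⸩ c = HahnSeries.C c := by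
  rw [HahnSeries.algebraMap_apply', PowerSeries.algebraMap_apply, Algebra.algebraMap_self,
    RingHom.id_apply, HahnSeries.ofPowerSeries_C]

theorem coeff_algebraMap_mul (c : R) (y : R⸨X⸩) (n : ℤ) :
    (algebraMap R R⸨X⸩ c * y).coeff n = c * y.coeff n := by
  rw [algebraMap_apply_eq_C, HahnSeries.C_apply, HahnSeries.coeff_single_zero_mul]

end CommSemiring

variable {R : Type*} [CommRing R] [IsDomain R]

theorem coeff_aeval_natDegree_mul_order {x : R⸨X⸩} (hx : x.order < 0) (G : R[X]) :
    (aeval x G).coeff (G.natDegree * x.order) = G.leadingCoeff * x.leadingCoeff ^ G.natDegree := by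
  simp_rw [aeval_eq_sum_range, Algebra.smul_def, HahnSeries.coeff_sum, coeff_algebraMap_mul]
  rw [Finset.sum_eq_single_of_mem _ (Finset.self_mem_range_succ _)]
  · rw [← HahnSeries.leadingCoeff_pow, HahnSeries.leadingCoeff_eq, HahnSeries.order_pow,
      nsmul_eq_mul, coeff_natDegree]
  intro i _ hid
  obtain hlt | hgt := lt_or_gt_of_ne hid
  · rw [HahnSeries.coeff_eq_zero_of_lt_order, mul_zero]
    rw [HahnSeries.order_pow, nsmul_eq_mul]
    exact mul_lt_mul_of_neg_right (by exact_mod_cast hlt) hx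
  · rw [coeff_eq_zero_of_natDegree_lt hgt, zero_mul]

theorem natDegree_eq_zero_of_coeff_aeval_neg_eq_zero {x : R⸨X⸩} (hx : x.order < 0) {G : R[X]}
    (hG : ∀ n < 0, (aeval x G).coeff n = 0) : G.natDegree = 0 := by
  by_contra hd
  have hx0 : x ≠ 0 := by rintro rfl; simp at hx
  have hG0 : G ≠ 0 := by rintro rfl; simp at hd
  have hlead := coeff_aeval_natDegree_mul_order hx G
  rw [hG _ (mul_neg_of_pos_of_neg (by omega) hx)] at hlead
  exact mul_ne_zero (leadingCoeff_ne_zero.mpr hG0)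
    (pow_ne_zero _ (HahnSeries.leadingCoeff_ne_zero.mpr hx0)) hlead.symm

theorem coeff_aeval_eq_zero_of_coeff_neg_eq_zero {x : R⸨X⸩} (hx : x.order < 0) {G : R[X]}
    (hG : ∀ n < 0, (aeval x G).coeff n = 0) {n : ℤ} (hn : n ≠ 0) : (aeval x G).coeff n = 0 := by
  rw [eq_C_of_natDegree_eq_zero (natDegree_eq_zero_of_coeff_aeval_neg_eq_zero hx hG), aeval_C,
    algebraMap_apply_eq_C, HahnSeries.C_apply, HahnSeries.coeff_single_of_ne hn]

end LaurentSeries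

theorem jq_coeff_neg_one : jq.coeff (-1) = 1 := by
  have hE4 : PowerSeries.constantCoeff E4 = 1 := by simp [E4]
  have hη : PowerSeries.constantCoeff (PowerSeries.invOfUnit etaPow24 1) = 1 := by
    simp [PowerSeries.constantCoeff_invOfUnit]
  rw [jq, HahnSeries.coeff_single_mul, one_mul, sub_self, ← Nat.cast_zero,
    HahnSeries.ofPowerSeries_apply_coeff, PowerSeries.coeff_zero_eq_constantCoeff_apply,
    map_mul, map_pow, hE4, hη, one_pow, one_mul]

theorem order_mapRingHom_jq_lt_zero {R : Type*} [CommRing R] [Nontrivial R] (f : ℤ →+* R) :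
    (HahnSeries.mapRingHom f jq).order < 0 :=
  (HahnSeries.order_le_of_coeff_ne_zero (g := -1) (by simp [jq_coeff_neg_one])).trans_lt
    (by norm_num)

theorem Up_constant_of_negative_vanishing_general (p : ℕ) (hp : p.Prime)
    (F : Polynomial ℤ)
    (G : Polynomial ℤ)
    (hG : ∀ n : ℤ, (p : ℤ) ∣
      ((Polynomial.aeval jq F).coeff ((p : ℤ) * n) - (Polynomial.aeval jq G).coeff n))
    (hneg : ∀ n : ℤ, 0 < n → (p : ℤ) ∣ (Polynomial.aeval jq F).coeff (-((p : ℤ) * n))) :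
    ∀ n : ℤ, n ≠ 0 → (p : ℤ) ∣ (Polynomial.aeval jq F).coeff ((p : ℤ) * n) := by
  have := Fact.mk hp
  let r := Int.castRingHom (ZMod p)
  have hUp (n : ℤ) : r ((aeval jq F).coeff (p * n)) =
      (aeval (HahnSeries.mapRingHom r jq) (G.map r)).coeff n := by
    rw [← map_aeval_eq_aeval_map (RingHom.ext_int _ _), HahnSeries.coeff_mapRingHom, eq_intCast,
      eq_intCast, ZMod.intCast_eq_intCast_iff_dvd_sub, dvd_sub_comm]
    exact hG n
  intro n hn
  rw [← ZMod.intCast_zmod_eq_zero_iff_dvd, ← eq_intCast r, hUp]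
  refine LaurentSeries.coeff_aeval_eq_zero_of_coeff_neg_eq_zero (order_mapRingHom_jq_lt_zero r)
    (fun m hm => ?_) hn
  rw [← hUp, eq_intCast, ZMod.intCast_zmod_eq_zero_iff_dvd, ← neg_neg m, mul_neg]
  exact hneg (-m) (neg_pos.mpr hm)

/-- Let `p` be prime, `F ∈ ℤ[x]` monic of degree `m`, `F(j) = Σ a(n)qⁿ`.  If
`F(j) | U(p) ≡ G(j) (mod p)` for some `G ∈ ℤ[x]` and `a(-pn) ≡ 0 (mod p)` for every
`n > 0`, then `F(j) | U(p) ≡ a(0) (mod p)`. -/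
theorem Up_constant_of_negative_vanishing (p : ℕ) (hp : p.Prime)
    (F : Polynomial ℤ) (hF : F.Monic) (m : ℕ) (hm : F.natDegree = m)
    (G : Polynomial ℤ)
    (hG : ∀ n : ℤ, (p : ℤ) ∣
      ((Polynomial.aeval jq F).coeff ((p : ℤ) * n) - (Polynomial.aeval jq G).coeff n))
    (hneg : ∀ n : ℤ, 0 < n → (p : ℤ) ∣ (Polynomial.aeval jq F).coeff (-((p : ℤ) * n))) :
    ∀ n : ℤ, n ≠ 0 → (p : ℤ) ∣ (Polynomial.aeval jq F).coeff ((p : ℤ) * n) :=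
  Up_constant_of_negative_vanishing_general p hp F G hG hneg
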